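/- Let (X,B,μ) be a measure space, q a lower bounded closed quadratic form on L²(X,μ) satisfying the first Beurling–Deny criterion, and D_q ⊆ D(q) a subspace that is an ideal of D(q) and is dense in D(q) with respect to the form norm ‖·‖_q. Then for every v ∈ D(q) with v ≥ 0 μ-almost everywhere, there exists a sequence (v_n) in D_q with 0 ≤ v_n ≤ v μ-almost everywhere for all n and ‖v_n − v‖_q → 0. -/

import Mathlib

open MeasureTheory
open scoped ComplexInnerProductSpace

noncomputable section

/-- A (densely defined) quadratic form on a complex Hilbert space `H`: a dense domain
`dom` and a map `Q` which, on the domain, is absolutely homogeneous of degree two and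
satisfies the parallelogram identity. (The values of `Q` outside of `dom` are irrelevant.) -/
structure QForm (H : Type*) [NormedAddCommGroup H] [InnerProductSpace ℂ H] where
  dom : Submodule ℂ H
  dense_dom : Dense (dom : Set H)
  Q : H → ℝ
  smul_eq : ∀ (a : ℂ), ∀ f ∈ dom, Q (a • f) = ‖a‖ ^ 2 * Q f
  parallelogram : ∀ f ∈ dom, ∀ g ∈ dom, Q (f + g) + Q (f - g) = 2 * Q f + 2 * Q g

/-- The squared form norm `‖f‖_q² = q(f) + μ'·‖f‖²` of a quadratic form, for a shift `μ'`. -/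
def QForm.normSq {H : Type*} [NormedAddCommGroup H] [InnerProductSpace ℂ H]
    (q : QForm H) (μ' : ℝ) (f : H) : ℝ :=
  q.Q f + μ' * ‖f‖ ^ 2

/-- A quadratic form on `L²(X,μ)` is real if the domain is conjugation invariant and
`q(conj f) = q(f)`. -/
def QForm.IsReal {X : Type*} [MeasurableSpace X] {μ : Measure X}
    (q : QForm (Lp ℂ 2 μ)) : Prop :=
  ∀ f ∈ q.dom, ∃ g ∈ q.dom,
    (∀ᵐ x ∂μ, g x = (starRingEnd ℂ) (f x)) ∧ q.Q g = q.Q f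

/-- The first Beurling–Deny criterion for a quadratic form on `L²(X,μ)`: the form is real,
and `f ∈ D(q)` implies `|f| ∈ D(q)` with `q(|f|) ≤ q(f)`. -/
def QForm.BeurlingDeny {X : Type*} [MeasurableSpace X] {μ : Measure X}
    (q : QForm (Lp ℂ 2 μ)) : Prop :=
  q.IsReal ∧ ∀ f ∈ q.dom, ∃ g ∈ q.dom,
    (∀ᵐ x ∂μ, g x = ((‖f x‖ : ℝ) : ℂ)) ∧ q.Q g ≤ q.Q f

end


noncomputable section

/-- Closedness of a quadratic form with respect to the form norm given by the shift `μ'`: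
every Cauchy sequence in the domain converges, in the form norm, to an element of the
domain. -/
def QForm.ClosedWith {H : Type*} [NormedAddCommGroup H] [InnerProductSpace ℂ H]
    (q : QForm H) (μ' : ℝ) : Prop :=
  ∀ u : ℕ → H, (∀ n, u n ∈ q.dom) →
    (∀ ε > (0 : ℝ), ∃ N : ℕ, ∀ i ≥ N, ∀ j ≥ N, q.normSq μ' (u i - u j) < ε) →
    ∃ v ∈ q.dom, Filter.Tendsto (fun n => q.normSq μ' (u n - v)) Filter.atTop (nhds 0)

end

/-!
Approximate `v` in the form norm by `fₙ ∈ D_q` and truncate: `gₙ = min ((Re fₙ)⁺, v)`.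
The Beurling–Deny criterion keeps `gₙ` in `D(q)` with `‖gₙ‖_q² ≤ ‖fₙ‖_q² + ‖v‖_q²`, the ideal
property puts it in `D_q`, and `0 ≤ gₙ ≤ v`, `‖gₙ - v‖₂ ≤ ‖fₙ - v‖₂ → 0`. Thus `(gₙ)` is bounded in
the Hilbert space `(D(q), ‖·‖_q)` and tends to `v` in `L²`, hence weakly in `D(q)`. By the
Banach–Saks property, Cesàro means of a subsequence tend to `v` in the form norm; they stay in
`D_q` and between `0` and `v` by convexity.
-/

open MeasureTheory Filter Topology
open scoped RealInnerProductSpace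

noncomputable section

theorem AddMonoidHom.continuous_of_abs_le_of_abs_le_one (f : ℝ →+ ℝ) {B : ℝ}
    (hB : ∀ s, |s| ≤ 1 → |f s| ≤ B) : Continuous f := by
  refine continuous_of_continuousAt_zero f (Metric.continuousAt_iff.2 fun ε hε => ?_)
  obtain ⟨n, hn⟩ := exists_nat_gt (B / ε)
  have hn₀ : (0 : ℝ) < n := (div_nonneg ((abs_nonneg _).trans (hB 0 (by simp))) hε.le).trans_lt hn
  refine ⟨1 / n, by positivity, fun {s} hs => ?_⟩
  rw [dist_zero_right, Real.norm_eq_abs, lt_div_iff₀' hn₀] at hs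
  rw [map_zero, dist_zero_right, Real.norm_eq_abs]
  rw [div_lt_iff₀ hε] at hn
  -- `n |f s| = |f (n s)| ≤ B < n ε`
  have h := hB (n • s) (by rw [nsmul_eq_mul, abs_mul, Nat.abs_cast]; exact hs.le)
  rw [map_nsmul, nsmul_eq_mul, abs_mul, Nat.abs_cast] at h
  exact lt_of_mul_lt_mul_left (h.trans_lt hn) hn₀.le

namespace QForm

variable {H : Type*} [NormedAddCommGroup H] [InnerProductSpace ℂ H] (q : QForm H)

theorem Q_zero : q.Q 0 = 0 := by
  simpa using q.smul_eq 0 0 q.dom.zero_mem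

theorem Q_neg {f : H} (hf : f ∈ q.dom) : q.Q (-f) = q.Q f := by
  simpa using q.smul_eq (-1) f hf

theorem Q_real_smul (t : ℝ) {f : H} (hf : f ∈ q.dom) : q.Q (t • f) = t ^ 2 * q.Q f := by
  simpa [Complex.coe_smul, sq_abs] using q.smul_eq t f hf

def shift (μ' : ℝ) : QForm H where
  dom := q.dom
  dense_dom := q.dense_dom
  Q := q.normSq μ'
  smul_eq a f hf := by
    simp only [normSq, q.smul_eq a f hf, norm_smul, mul_pow]
    ring
  parallelogram f hf g hg := by
    simp only [normSq]
    linear_combination q.parallelogram f hf g hg + μ' * parallelogram_law_with_norm ℂ f g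

@[simp]
theorem shift_dom (μ' : ℝ) : (q.shift μ').dom = q.dom := rfl

@[simp]
theorem shift_Q (μ' : ℝ) : (q.shift μ').Q = q.normSq μ' := rfl

def polar (f g : H) : ℝ := (q.Q (f + g) - q.Q (f - g)) / 4

variable {q}

theorem ClosedWith.shift {μ' : ℝ} (h : q.ClosedWith μ') : (q.shift μ').ClosedWith 0 := by
  simpa [ClosedWith, normSq] using h

theorem polar_comm {f g : H} (hf : f ∈ q.dom) (hg : g ∈ q.dom) : q.polar f g = q.polar g f := by
  rw [polar, polar, add_comm, ← q.Q_neg (q.dom.sub_mem hf hg), neg_sub]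

theorem polar_self {f : H} (hf : f ∈ q.dom) : q.polar f f = q.Q f := by
  have h := q.parallelogram f hf f hf
  rw [sub_self, q.Q_zero] at h
  rw [polar, sub_self, q.Q_zero]
  linarith

theorem polar_add_left {f g h : H} (hf : f ∈ q.dom) (hg : g ∈ q.dom) (hh : h ∈ q.dom) :
    q.polar (f + g) h = q.polar f h + q.polar g h := by
  have h₁ := q.parallelogram _ (q.dom.add_mem hf hh) _ hg
  have h₂ := q.parallelogram _ (q.dom.sub_mem hf hh) _ hg
  have h₃ := q.parallelogram _ (q.dom.add_mem hg hh) _ hf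
  have h₄ := q.parallelogram _ (q.dom.sub_mem hg hh) _ hf
  rw [show f + h + g = f + g + h by abel] at h₁
  rw [show f - h + g = f + g - h by abel] at h₂
  rw [show g + h + f = f + g + h by abel] at h₃
  rw [show g - h + f = f + g - h by abel] at h₄
  have h₅ : q.Q (f - h - g) = q.Q (g + h - f) := by
    rw [← q.Q_neg (q.dom.sub_mem (q.dom.add_mem hg hh) hf), neg_sub, sub_sub, add_comm h]
  have h₆ : q.Q (g - h - f) = q.Q (f + h - g) := by
    rw [← q.Q_neg (q.dom.sub_mem (q.dom.add_mem hf hh) hg), neg_sub, sub_sub, add_comm h]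
  simp only [polar]
  linarith

theorem Q_add_le (hq : ∀ f ∈ q.dom, 0 ≤ q.Q f) {f g : H} (hf : f ∈ q.dom) (hg : g ∈ q.dom) :
    q.Q (f + g) ≤ 2 * q.Q f + 2 * q.Q g := by
  linarith [q.parallelogram f hf g hg, hq _ (q.dom.sub_mem hf hg)]

theorem Q_sub_le (hq : ∀ f ∈ q.dom, 0 ≤ q.Q f) {f g : H} (hf : f ∈ q.dom) (hg : g ∈ q.dom) :
    q.Q (f - g) ≤ 2 * q.Q f + 2 * q.Q g := by
  linarith [q.parallelogram f hf g hg, hq _ (q.dom.add_mem hf hg)]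

theorem Q_half_smul_add_le (hq : ∀ f ∈ q.dom, 0 ≤ q.Q f) {f g : H} (hf : f ∈ q.dom)
    (hg : g ∈ q.dom) :
    q.Q ((2⁻¹ : ℂ) • (f + g)) ≤ (q.Q f + q.Q g) / 2 := by
  rw [q.smul_eq _ _ (q.dom.add_mem hf hg), show ‖(2⁻¹ : ℂ)‖ ^ 2 = 4⁻¹ by norm_num]
  linarith [Q_add_le hq hf hg]

theorem Q_half_smul_sub_le (hq : ∀ f ∈ q.dom, 0 ≤ q.Q f) {f g : H} (hf : f ∈ q.dom)
    (hg : g ∈ q.dom) :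
    q.Q ((2⁻¹ : ℂ) • (f - g)) ≤ (q.Q f + q.Q g) / 2 := by
  rw [q.smul_eq _ _ (q.dom.sub_mem hf hg), show ‖(2⁻¹ : ℂ)‖ ^ 2 = 4⁻¹ by norm_num]
  linarith [Q_sub_le hq hf hg]

theorem abs_polar_le (hq : ∀ f ∈ q.dom, 0 ≤ q.Q f) {f g : H} (hf : f ∈ q.dom) (hg : g ∈ q.dom) :
    |q.polar f g| ≤ (q.Q f + q.Q g) / 2 := by
  have h := q.parallelogram f hf g hg
  have h₁ := hq _ (q.dom.add_mem hf hg)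
  have h₂ := hq _ (q.dom.sub_mem hf hg)
  rw [abs_le, polar]
  constructor <;> linarith

theorem polar_smul_left (hq : ∀ f ∈ q.dom, 0 ≤ q.Q f) (t : ℝ) {f g : H} (hf : f ∈ q.dom)
    (hg : g ∈ q.dom) :
    q.polar (t • f) g = t * q.polar f g := by
  let ψ : ℝ →+ ℝ := AddMonoidHom.mk' (fun s => q.polar (s • f) g) fun s s' => by
    simp only [add_smul]
    exact polar_add_left (q.dom.smul_of_tower_mem s hf) (q.dom.smul_of_tower_mem s' hf) hg
  have hψ : Continuous ψ := ψ.continuous_of_abs_le_of_abs_le_one (B := (q.Q f + q.Q g) / 2)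
    fun s hs => by
      refine (abs_polar_le hq (q.dom.smul_of_tower_mem s hf) hg).trans ?_
      have : s ^ 2 ≤ 1 := by nlinarith [sq_abs s, abs_nonneg s]
      rw [q.Q_real_smul s hf]
      nlinarith [hq f hf]
  simpa [ψ] using map_real_smul ψ hψ t 1

end QForm

theorem smul_sum_range_sub_const {M : Type*} [AddCommGroup M] [Module ℝ M] (y : ℕ → M) (v : M)
    (K : ℕ) : ((K : ℝ) + 1)⁻¹ • ∑ k ∈ Finset.range (K + 1), (y k - v)
      = ((K : ℝ) + 1)⁻¹ • ∑ k ∈ Finset.range (K + 1), y k - v := by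
  rw [Finset.sum_sub_distrib, smul_sub, Finset.sum_const, Finset.card_range,
    ← Nat.cast_smul_eq_nsmul ℝ, smul_smul, Nat.cast_succ, inv_mul_cancel₀ (by positivity),
    one_smul]

theorem Convex.smul_sum_range_mem {M : Type*} [AddCommGroup M] [Module ℝ M] {s : Set M}
    (hs : Convex ℝ s) {y : ℕ → M} (hy : ∀ k, y k ∈ s) (K : ℕ) :
    ((K : ℝ) + 1)⁻¹ • ∑ k ∈ Finset.range (K + 1), y k ∈ s := by
  rw [Finset.smul_sum]
  refine hs.sum_mem (fun _ _ => by positivity) ?_ fun k _ => hy k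
  rw [Finset.sum_const, Finset.card_range, nsmul_eq_mul, Nat.cast_succ,
    mul_inv_cancel₀ (by positivity)]

section InnerProductSpace

variable {E : Type*} [NormedAddCommGroup E] [InnerProductSpace ℝ E]

theorem exists_subseq_inner_le_of_tendsto_inner_zero {x : ℕ → E}
    (hx : ∀ y, Tendsto (fun n => ⟪x n, y⟫) atTop (𝓝 0)) :
    ∃ φ : ℕ → ℕ, ∀ j k, j < k → ⟪x (φ j), x (φ k)⟫ ≤ 1 / (k + 1) := by
  -- Choose pairs `(i, n)`: the strictly increasing index `i` (so `i ≥ k` at position `k`) sets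
  -- the bound `1 / (i + 1)` on the inner products of `x n` with all earlier terms.
  obtain ⟨f, -, hf⟩ := exists_seq_of_forall_finset_exists (fun _ : ℕ × ℕ => True)
    (fun a b => a.1 < b.1 ∧ ⟪x a.2, x b.2⟫ ≤ 1 / (b.1 + 1)) fun s _ => by
      set i := s.sup Prod.fst + 1
      have hev : ∀ᶠ n in atTop, ∀ a ∈ s, ⟪x a.2, x n⟫ ≤ 1 / (i + 1) :=
        (Filter.eventually_all_finset s).2 fun a _ => by
          have hi : (0 : ℝ) < 1 / (i + 1) := by positivity
          refine ((hx (x a.2)).eventually (ge_mem_nhds hi)).mono fun n hn => ?_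
          rwa [real_inner_comm]
      obtain ⟨n, hn⟩ := hev.exists
      exact ⟨(i, n), trivial, fun a ha => ⟨Nat.lt_succ_of_le (Finset.le_sup ha), hn a ha⟩⟩
  have hmono : StrictMono fun k => (f k).1 :=
    strictMono_nat_of_lt_succ fun k => (hf k (k + 1) k.lt_succ_self).1
  refine ⟨fun k => (f k).2, fun j k hjk => (hf j k hjk).2.trans ?_⟩
  gcongr
  exact_mod_cast hmono.id_le k

theorem norm_sum_range_sq_le {x : ℕ → E} {M : ℝ} (hM : ∀ n, ‖x n‖ ≤ M)
    (hx : ∀ j k, j < k → ⟪x j, x k⟫ ≤ 1 / (k + 1)) (K : ℕ) :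
    ‖∑ k ∈ Finset.range K, x k‖ ^ 2 ≤ K * (M ^ 2 + 2) := by
  induction K with
  | zero => simp
  | succ K ih =>
    have hinner : ⟪∑ k ∈ Finset.range K, x k, x K⟫ ≤ 1 := by
      rw [sum_inner]
      calc ∑ k ∈ Finset.range K, ⟪x k, x K⟫ ≤ ∑ _k ∈ Finset.range K, 1 / ((K : ℝ) + 1) :=
            Finset.sum_le_sum fun k hk => hx k K (Finset.mem_range.1 hk)
        _ = K / (K + 1) := by simp [div_eq_mul_inv]
        _ ≤ 1 := div_le_one_of_le₀ (by linarith) (by positivity)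
    have hxK : ‖x K‖ ^ 2 ≤ M ^ 2 := pow_le_pow_left₀ (norm_nonneg _) (hM K) 2
    rw [Finset.sum_range_succ, norm_add_sq_real]
    push_cast
    linarith

/-- The Banach–Saks property of inner product spaces. -/
theorem exists_tendsto_cesaro_zero_of_tendsto_inner_zero {x : ℕ → E} {M : ℝ}
    (hM : ∀ n, ‖x n‖ ≤ M) (hx : ∀ y, Tendsto (fun n => ⟪x n, y⟫) atTop (𝓝 0)) :
    ∃ φ : ℕ → ℕ, Tendsto (fun K : ℕ => ((K : ℝ) + 1)⁻¹ • ∑ k ∈ Finset.range (K + 1), x (φ k))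
      atTop (𝓝 0) := by
  obtain ⟨φ, hφ⟩ := exists_subseq_inner_le_of_tendsto_inner_zero hx
  refine ⟨φ, ?_⟩
  have hsq : ∀ K : ℕ, ‖((K : ℝ) + 1)⁻¹ • ∑ k ∈ Finset.range (K + 1), x (φ k)‖ ^ 2
      ≤ (M ^ 2 + 2) / (K + 1) := fun K => by
    have h := norm_sum_range_sq_le (fun n => hM (φ n)) hφ (K + 1)
    rw [norm_smul, mul_pow, Real.norm_eq_abs, abs_of_pos (by positivity)]
    push_cast at h
    calc ((K : ℝ) + 1)⁻¹ ^ 2 * ‖∑ k ∈ Finset.range (K + 1), x (φ k)‖ ^ 2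
        ≤ ((K : ℝ) + 1)⁻¹ ^ 2 * ((K + 1) * (M ^ 2 + 2)) := by gcongr
      _ = (M ^ 2 + 2) / (K + 1) := by field_simp
  have hbound : Tendsto (fun K : ℕ => (M ^ 2 + 2) / ((K : ℝ) + 1)) atTop (𝓝 0) := by
    simpa [Function.comp_def] using
      (tendsto_const_div_atTop_nhds_zero_nat (M ^ 2 + 2)).comp (tendsto_add_atTop_nat 1)
  refine squeeze_zero_norm (fun K => (abs_norm _).symm.trans_le (Real.abs_le_sqrt (hsq K))) ?_
  simpa using hbound.sqrt

end InnerProductSpace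

section Hilbert

variable {E F : Type*} [NormedAddCommGroup E] [InnerProductSpace ℝ E] [CompleteSpace E]
  [NormedAddCommGroup F] [InnerProductSpace ℝ F] [CompleteSpace F]

theorem ContinuousLinearMap.denseRange_adjoint_of_injective {T : E →L[ℝ] F}
    (hT : Function.Injective T) : DenseRange (adjoint T) := by
  have h := (adjoint T).range.topologicalClosure_eq_top_iff.2 (by
    rw [orthogonal_range, adjoint_adjoint]
    exact LinearMap.ker_eq_bot.2 hT)
  exact (adjoint T).range.dense_iff_topologicalClosure_eq_top.2 h

theorem tendsto_inner_zero_of_tendsto_apply_zero {T : E →L[ℝ] F} (hT : Function.Injective T)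
    {x : ℕ → E} {M : ℝ} (hM : ∀ n, ‖x n‖ ≤ M) (hx : Tendsto (fun n => T (x n)) atTop (𝓝 0))
    (y : E) : Tendsto (fun n => ⟪x n, y⟫) atTop (𝓝 0) := by
  have hequi : Equicontinuous fun n => (innerSL ℝ (x n) : E → ℝ) := by
    refine ((NormedSpace.equicontinuous_TFAE fun n => innerSL ℝ (x n)).out 1 5).2 ?_
    exact ⟨M, fun n => (innerSL_apply_norm ℝ (x n)).trans_le (hM n)⟩
  have hclosed := hequi.isClosed_setOfPred_tendsto (l := atTop) (continuous_const (y := (0 : ℝ)))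
  -- on the dense range of `T†` the claim is `⟪T (x n), z⟫ → 0`
  have hrange : Set.range (ContinuousLinearMap.adjoint T) ⊆
      {y | Tendsto (fun n => innerSL ℝ (x n) y) atTop (𝓝 0)} := by
    rintro _ ⟨z, rfl⟩
    simp only [Set.mem_ofPred_eq, innerSL_apply_apply, ContinuousLinearMap.adjoint_inner_right]
    simpa using hx.inner (tendsto_const_nhds (x := z))
  simpa using hclosed.closure_subset_iff.2 hrange
    ((ContinuousLinearMap.denseRange_adjoint_of_injective hT).closure_eq ▸ Set.mem_univ y)

theorem exists_tendsto_cesaro_of_tendsto_apply {T : E →L[ℝ] F} (hT : Function.Injective T)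
    {y : ℕ → E} {M : ℝ} (hM : ∀ n, ‖y n‖ ≤ M) {v : E}
    (hy : Tendsto (fun n => T (y n)) atTop (𝓝 (T v))) :
    ∃ φ : ℕ → ℕ, Tendsto (fun K : ℕ => ((K : ℝ) + 1)⁻¹ • ∑ k ∈ Finset.range (K + 1), y (φ k))
      atTop (𝓝 v) := by
  have hM' : ∀ n, ‖y n - v‖ ≤ M + ‖v‖ := fun n => (norm_sub_le _ _).trans (by linarith [hM n])
  have hTy : Tendsto (fun n => T (y n - v)) atTop (𝓝 0) := by
    simpa [map_sub] using hy.sub_const (T v)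
  obtain ⟨φ, hφ⟩ := exists_tendsto_cesaro_zero_of_tendsto_inner_zero hM'
    (tendsto_inner_zero_of_tendsto_apply_zero hT hM' hTy)
  refine ⟨φ, ?_⟩
  simpa only [smul_sum_range_sub_const, sub_add_cancel, zero_add] using hφ.add_const v

end Hilbert

structure CoerciveQForm (H : Type*) [NormedAddCommGroup H] [InnerProductSpace ℂ H]
    extends QForm H where
  c : ℝ
  c_pos : 0 < c
  le_Q : ∀ f ∈ dom, c * ‖f‖ ^ 2 ≤ Q f

def QForm.shiftCoercive {H : Type*} [NormedAddCommGroup H] [InnerProductSpace ℂ H]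
    (q : QForm H) {lam μ' : ℝ} (hlb : ∀ f ∈ q.dom, -lam * ‖f‖ ^ 2 ≤ q.Q f) (hmu : lam < μ') :
    CoerciveQForm H where
  toQForm := q.shift μ'
  c := μ' - lam
  c_pos := sub_pos.2 hmu
  le_Q f hf := by
    simp only [QForm.shift_Q, QForm.normSq]
    linarith [hlb f hf]

namespace CoerciveQForm

variable {H : Type*} [NormedAddCommGroup H] [InnerProductSpace ℂ H] (p : CoerciveQForm H)

theorem Q_nonneg {f : H} (hf : f ∈ p.dom) : 0 ≤ p.Q f :=
  le_trans (by have := p.c_pos; positivity) (p.le_Q f hf)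

/-- A type synonym for `p.dom`, so that it carries the form norm instead of the norm of `H`. -/
def Domain : Type _ := p.dom

def toDomain (f : H) (hf : f ∈ p.dom) : p.Domain := ⟨f, hf⟩

instance : AddCommGroup p.Domain := inferInstanceAs (AddCommGroup p.dom)

instance : Module ℝ p.Domain := inferInstanceAs (Module ℝ p.dom)

abbrev innerCore : InnerProductSpace.Core ℝ p.Domain where
  inner f g := p.polar f.1 g.1
  conj_inner_symm f g := QForm.polar_comm g.2 f.2
  re_inner_nonneg f := by
    simpa [QForm.polar_self f.2] using p.Q_nonneg f.2
  add_left f g h := QForm.polar_add_left f.2 g.2 h.2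
  smul_left f g t := QForm.polar_smul_left (fun _ => p.Q_nonneg) t f.2 g.2
  definite f hf := by
    have h : p.c * ‖f.1‖ ^ 2 ≤ 0 := by
      simpa [← QForm.polar_self f.2, show p.polar f.1 f.1 = 0 from hf] using p.le_Q f.1 f.2
    have h₂ : ‖f.1‖ ^ 2 = 0 := le_antisymm (nonpos_of_mul_nonpos_right h p.c_pos) (by positivity)
    exact Subtype.ext (norm_eq_zero.1 (pow_eq_zero_iff two_ne_zero |>.1 h₂))

instance : NormedAddCommGroup p.Domain := p.innerCore.toNormedAddCommGroup

instance : InnerProductSpace ℝ p.Domain := InnerProductSpace.ofCore p.innerCore.toCore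

def incl : p.Domain →L[ℝ] H :=
  LinearMap.mkContinuous
    { toFun := fun f => f.1
      map_add' := fun _ _ => rfl
      map_smul' := fun _ _ => rfl }
    (√p.c)⁻¹ fun f => by
      have h : p.c * ‖f.1‖ ^ 2 ≤ ‖f‖ ^ 2 :=
        (p.le_Q f.1 f.2).trans_eq ((QForm.polar_self f.2).symm.trans (real_inner_self_eq_norm_sq f))
      rw [inv_mul_eq_div, le_div_iff₀ (Real.sqrt_pos.2 p.c_pos)]
      refine (pow_le_pow_iff_left₀ (by positivity) (norm_nonneg _) two_ne_zero).1 ?_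
      rwa [mul_pow, Real.sq_sqrt p.c_pos.le, mul_comm]

@[simp]
theorem incl_toDomain {f : H} (hf : f ∈ p.dom) : p.incl (p.toDomain f hf) = f := rfl

theorem incl_mem (f : p.Domain) : p.incl f ∈ p.dom := f.2

theorem incl_injective : Function.Injective p.incl := Subtype.val_injective

theorem norm_sq_domain (f : p.Domain) : ‖f‖ ^ 2 = p.Q (p.incl f) := by
  rw [← real_inner_self_eq_norm_sq]
  exact QForm.polar_self f.2

theorem norm_sub_sq_domain (f g : p.Domain) : ‖f - g‖ ^ 2 = p.Q (p.incl f - p.incl g) :=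
  p.norm_sq_domain (f - g)

theorem completeSpace_domain (hp : p.ClosedWith 0) : CompleteSpace p.Domain := by
  simp only [QForm.ClosedWith, QForm.normSq, zero_mul, add_zero] at hp
  refine Metric.complete_of_cauchySeq_tendsto fun u hu => ?_
  obtain ⟨w, hw, hlim⟩ := hp (fun n => p.incl (u n)) (fun n => p.incl_mem (u n)) fun ε hε => by
    obtain ⟨N, hN⟩ := Metric.cauchySeq_iff.1 hu (√ε) (Real.sqrt_pos.2 hε)
    refine ⟨N, fun i hi j hj => ?_⟩
    rw [← norm_sub_sq_domain, ← Real.sq_sqrt hε.le, ← dist_eq_norm]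
    exact pow_lt_pow_left₀ (hN i hi j hj) dist_nonneg two_ne_zero
  refine ⟨p.toDomain w hw, tendsto_iff_norm_sub_tendsto_zero.2 ?_⟩
  convert hlim.sqrt using 2 with n
  · rw [← Real.sqrt_sq (norm_nonneg _), norm_sub_sq_domain, incl_toDomain]
  · simp

theorem exists_seq_tendsto_of_dense {S : Set H} (hS : S ⊆ p.dom)
    (hdense : ∀ f ∈ p.dom, ∀ ε > (0 : ℝ), ∃ g ∈ S, p.Q (f - g) < ε) (f : p.Domain) :
    ∃ u : ℕ → p.Domain, (∀ n, p.incl (u n) ∈ S) ∧ Tendsto u atTop (𝓝 f) := by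
  refine mem_closure_iff_seq_limit.1
    (Metric.mem_closure_iff.2 fun ε hε => ?_ : f ∈ closure {u | p.incl u ∈ S})
  obtain ⟨g, hgS, hg⟩ := hdense (p.incl f) (p.incl_mem f) (ε ^ 2) (by positivity)
  refine ⟨p.toDomain g (hS hgS), hgS, ?_⟩
  rw [dist_eq_norm, ← pow_lt_pow_iff_left₀ (norm_nonneg _) hε.le two_ne_zero,
    norm_sub_sq_domain, incl_toDomain]
  exact hg

theorem exists_tendsto_cesaro [CompleteSpace H] (hp : p.ClosedWith 0) {g : ℕ → H}
    (hg : ∀ n, g n ∈ p.dom) {C : ℝ} (hC : ∀ n, p.Q (g n) ≤ C) {v : H} (hv : v ∈ p.dom)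
    (hgv : Tendsto g atTop (𝓝 v)) :
    ∃ φ : ℕ → ℕ, Tendsto (fun K : ℕ =>
      p.Q (((K : ℝ) + 1)⁻¹ • ∑ k ∈ Finset.range (K + 1), g (φ k) - v)) atTop (𝓝 0) := by
  let _ : InnerProductSpace ℝ H := .complexToReal
  have := p.completeSpace_domain hp
  set gD := fun n => p.toDomain (g n) (hg n)
  have hgD : ∀ n, ‖gD n‖ ≤ √C := fun n =>
    (abs_norm _).symm.trans_le (Real.abs_le_sqrt ((p.norm_sq_domain _).trans_le (hC n)))
  obtain ⟨φ, hφ⟩ := exists_tendsto_cesaro_of_tendsto_apply p.incl_injective hgD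
    (v := p.toDomain v hv) hgv
  refine ⟨φ, ?_⟩
  have hnorm : ∀ K : ℕ, p.Q (((K : ℝ) + 1)⁻¹ • ∑ k ∈ Finset.range (K + 1), g (φ k) - v)
      = ‖((K : ℝ) + 1)⁻¹ • ∑ k ∈ Finset.range (K + 1), gD (φ k) - p.toDomain v hv‖ ^ 2 :=
    fun K => by
      rw [p.norm_sub_sq_domain, map_smul, map_sum]
      rfl
  simpa [hnorm] using (tendsto_iff_norm_sub_tendsto_zero.1 hφ).pow 2

end CoerciveQForm

namespace MeasureTheory.Lp

variable {X : Type*} [MeasurableSpace X] {μ : Measure X} {p : ENNReal}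

theorem norm_eq_norm_of_ae_norm_eq {f g : Lp ℂ p μ} (h : ∀ᵐ x ∂μ, ‖f x‖ = ‖g x‖) :
    ‖f‖ = ‖g‖ :=
  le_antisymm (norm_le_norm_of_ae_le (h.mono fun _ hx => hx.le))
    (norm_le_norm_of_ae_le (h.mono fun _ hx => hx.ge))

def nonnegBelow (v : Lp ℂ p μ) : Set (Lp ℂ p μ) :=
  {f | ∀ᵐ x ∂μ, (f x).im = 0 ∧ 0 ≤ (f x).re ∧ (f x).re ≤ (v x).re}

theorem convex_nonnegBelow (v : Lp ℂ p μ) : Convex ℝ (nonnegBelow v) := by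
  intro f hf g hg a b ha hb hab
  filter_upwards [hf, hg, coeFn_add (a • f) (b • g), coeFn_smul a f, coeFn_smul b g]
    with x hfx hgx hsum hfa hgb
  rw [hsum, Pi.add_apply, hfa, hgb, Pi.smul_apply, Pi.smul_apply]
  simp only [Complex.add_im, Complex.add_re, Complex.smul_im, Complex.smul_re, smul_eq_mul,
    hfx.1, hgx.1, mul_zero, add_zero, true_and]
  obtain ⟨-, hf₀, hfv⟩ := hfx
  obtain ⟨-, hg₀, hgv⟩ := hgx
  constructor <;> nlinarith

end MeasureTheory.Lp

namespace QForm

variable {X : Type*} [MeasurableSpace X] {μ : Measure X} {q : QForm (Lp ℂ 2 μ)}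

theorem BeurlingDeny.shift (h : q.BeurlingDeny) (μ' : ℝ) : (q.shift μ').BeurlingDeny := by
  refine ⟨fun f hf => ?_, fun f hf => ?_⟩
  · obtain ⟨g, hg, hgf, hQ⟩ := h.1 f hf
    refine ⟨g, hg, hgf, ?_⟩
    rw [shift_Q, normSq, normSq, hQ, Lp.norm_eq_norm_of_ae_norm_eq (hgf.mono fun x hx => ?_)]
    rw [hx, Complex.norm_conj]
  · obtain ⟨g, hg, hgf, hQ⟩ := h.2 f hf
    refine ⟨g, hg, hgf, ?_⟩
    rw [shift_Q, normSq, normSq, Lp.norm_eq_norm_of_ae_norm_eq (hgf.mono fun x hx => ?_)]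
    · linarith
    rw [hx, Complex.norm_real, norm_norm]

theorem exists_ae_eq_re (hreal : q.IsReal) (hq : ∀ f ∈ q.dom, 0 ≤ q.Q f) {f : Lp ℂ 2 μ}
    (hf : f ∈ q.dom) :
    ∃ r ∈ q.dom, (∀ᵐ x ∂μ, r x = ((f x).re : ℂ)) ∧ q.Q r ≤ q.Q f := by
  obtain ⟨g, hg, hgf, hQ⟩ := hreal f hf
  refine ⟨(2⁻¹ : ℂ) • (f + g), q.dom.smul_mem _ (q.dom.add_mem hf hg), ?_, ?_⟩
  · filter_upwards [hgf, Lp.coeFn_smul (2⁻¹ : ℂ) (f + g), Lp.coeFn_add f g] with x hx h₁ h₂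
    rw [h₁, Pi.smul_apply, h₂, Pi.add_apply, hx, Complex.add_conj, smul_eq_mul]
    push_cast
    ring
  · linarith [Q_half_smul_add_le hq hf hg]

theorem exists_ae_eq_max_zero (hBD : q.BeurlingDeny) (hq : ∀ f ∈ q.dom, 0 ≤ q.Q f)
    {f : Lp ℂ 2 μ} (hf : f ∈ q.dom) {φ : X → ℝ} (hφ : ∀ᵐ x ∂μ, f x = φ x) :
    ∃ g ∈ q.dom, (∀ᵐ x ∂μ, g x = (max (φ x) 0 : ℝ)) ∧ q.Q g ≤ q.Q f := by
  obtain ⟨a, ha, haf, hQ⟩ := hBD.2 f hf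
  refine ⟨(2⁻¹ : ℂ) • (f + a), q.dom.smul_mem _ (q.dom.add_mem hf ha), ?_, ?_⟩
  · filter_upwards [hφ, haf, Lp.coeFn_smul (2⁻¹ : ℂ) (f + a), Lp.coeFn_add f a]
      with x hfx hax h₁ h₂
    rw [h₁, Pi.smul_apply, h₂, Pi.add_apply, hax, hfx, Complex.norm_real, Real.norm_eq_abs,
      smul_eq_mul, show max (φ x) 0 = 2⁻¹ * (φ x + |φ x|) by grind]
    push_cast
    ring
  · linarith [Q_half_smul_add_le hq hf ha]

theorem exists_ae_eq_min (hBD : q.BeurlingDeny) (hq : ∀ f ∈ q.dom, 0 ≤ q.Q f)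
    {f g : Lp ℂ 2 μ} (hf : f ∈ q.dom) (hg : g ∈ q.dom) {φ ψ : X → ℝ}
    (hφ : ∀ᵐ x ∂μ, f x = φ x) (hψ : ∀ᵐ x ∂μ, g x = ψ x) :
    ∃ h ∈ q.dom, (∀ᵐ x ∂μ, h x = (min (φ x) (ψ x) : ℝ)) ∧ q.Q h ≤ q.Q f + q.Q g := by
  obtain ⟨a, ha, haf, hQ⟩ := hBD.2 (f - g) (q.dom.sub_mem hf hg)
  refine ⟨(2⁻¹ : ℂ) • (f + g - a), q.dom.smul_mem _ (q.dom.sub_mem (q.dom.add_mem hf hg) ha),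
    ?_, ?_⟩
  · filter_upwards [hφ, hψ, haf, Lp.coeFn_smul (2⁻¹ : ℂ) (f + g - a), Lp.coeFn_sub (f + g) a,
      Lp.coeFn_add f g, Lp.coeFn_sub f g] with x hfx hgx hax h₁ h₂ h₃ h₄
    rw [h₁, Pi.smul_apply, h₂, Pi.sub_apply, h₃, Pi.add_apply, hax, h₄, Pi.sub_apply, hfx, hgx,
      ← Complex.ofReal_sub, Complex.norm_real, Real.norm_eq_abs, smul_eq_mul,
      show min (φ x) (ψ x) = 2⁻¹ * (φ x + ψ x - |φ x - ψ x|) by grind]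
    push_cast
    ring
  · -- `q(|f - g|) ≤ q(f - g)` and the parallelogram identity give `q(h) ≤ (q(f+g) + q(f-g))/4`
    have h₁ := Q_half_smul_sub_le hq (q.dom.add_mem hf hg) ha
    have h₂ := q.parallelogram f hf g hg
    linarith

/-- The truncation `min ((Re f)⁺, v)` of `f` at a nonnegative `v`. -/
theorem exists_truncation (hBD : q.BeurlingDeny) (hq : ∀ f ∈ q.dom, 0 ≤ q.Q f)
    {v : Lp ℂ 2 μ} (hv : v ∈ q.dom) (hvpos : ∀ᵐ x ∂μ, (v x).im = 0 ∧ 0 ≤ (v x).re)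
    {f : Lp ℂ 2 μ} (hf : f ∈ q.dom) :
    ∃ g ∈ q.dom, g ∈ Lp.nonnegBelow v ∧ (∀ᵐ x ∂μ, ‖g x‖ ≤ ‖f x‖) ∧ ‖g - v‖ ≤ ‖f - v‖ ∧
      q.Q g ≤ q.Q f + q.Q v := by
  obtain ⟨r, hr, hrf, hQr⟩ := exists_ae_eq_re hBD.1 hq hf
  obtain ⟨s, hs, hsr, hQs⟩ := exists_ae_eq_max_zero hBD hq hr hrf
  have hvre : ∀ᵐ x ∂μ, v x = ((v x).re : ℂ) :=
    hvpos.mono fun x hx => Complex.ext rfl (by simp [hx.1])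
  obtain ⟨g, hg, hgx, hQg⟩ := exists_ae_eq_min hBD hq hs hv hsr hvre
  refine ⟨g, hg, ?_, ?_, ?_, by linarith⟩
  · filter_upwards [hgx, hvpos] with x hx hvx
    simp only [hx, Complex.ofReal_im, Complex.ofReal_re, true_and]
    exact ⟨le_min (le_max_right _ _) hvx.2, min_le_right _ _⟩
  · filter_upwards [hgx, hvpos] with x hx hvx
    rw [hx, Complex.norm_real, Real.norm_eq_abs]
    have hv₀ : 0 ≤ (v x).re := hvx.2
    exact (by grind : |min (max (f x).re 0) (v x).re| ≤ |(f x).re|).trans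
      (Complex.abs_re_le_norm _)
  · refine Lp.norm_le_norm_of_ae_le ?_
    filter_upwards [hgx, hvre, hvpos, Lp.coeFn_sub g v, Lp.coeFn_sub f v]
      with x hx hvx hvx' hgv hfv
    rw [hgv, hfv, Pi.sub_apply, Pi.sub_apply, hx, hvx, ← Complex.ofReal_sub, Complex.norm_real,
      Real.norm_eq_abs]
    have hv₀ : 0 ≤ (v x).re := hvx'.2
    refine (by grind : |min (max (f x).re 0) (v x).re - (v x).re| ≤ |(f x).re - (v x).re|).trans
      ?_
    rw [← hvx]
    simpa using Complex.abs_re_le_norm (f x - v x)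

end QForm

end

/-- Let `q` be a lower bounded closed quadratic form on `L²(X,μ)`
satisfying the first Beurling–Deny criterion and let `D_q ⊆ D(q)` be an ideal of `D(q)`
which is dense with respect to the form norm. Then for every `0 ≤ v ∈ D(q)` there is a
sequence `(v_n)` in `D_q` with `0 ≤ v_n ≤ v` a.e. and `‖v_n − v‖_q → 0`. -/
theorem stmt5 {X : Type*} [MeasurableSpace X] {μ : Measure X}
    (q : QForm (Lp ℂ 2 μ)) (lam mu' : ℝ)
    (hlb : ∀ f ∈ q.dom, -lam * ‖f‖ ^ 2 ≤ q.Q f) (hmu : lam < mu')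
    (hBD : q.BeurlingDeny) (hclosed : q.ClosedWith mu')
    (Dq : Submodule ℂ (Lp ℂ 2 μ)) (hDq : Dq ≤ q.dom)
    (hideal : ∀ f ∈ Dq, ∀ g ∈ q.dom,
      (∀ᵐ x ∂μ, ‖g x‖ ≤ ‖f x‖) → g ∈ Dq)
    (hdense : ∀ f ∈ q.dom, ∀ ε > (0 : ℝ), ∃ g ∈ Dq, q.normSq mu' (f - g) < ε)
    (v : Lp ℂ 2 μ) (hv : v ∈ q.dom)
    (hvpos : ∀ᵐ x ∂μ, (v x).im = 0 ∧ 0 ≤ (v x).re) :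
    ∃ u : ℕ → Lp ℂ 2 μ, (∀ n, u n ∈ Dq) ∧
      (∀ n, ∀ᵐ x ∂μ, (u n x).im = 0 ∧ 0 ≤ (u n x).re ∧ (u n x).re ≤ (v x).re) ∧
      Filter.Tendsto (fun n => q.normSq mu' (u n - v)) Filter.atTop (nhds 0) := by
  set p := q.shiftCoercive hlb hmu
  obtain ⟨f, hfDq, hfv⟩ := p.exists_seq_tendsto_of_dense (S := Dq) hDq hdense (p.toDomain v hv)
  have hpBD : p.BeurlingDeny := hBD.shift mu'
  choose g hg hg0v hgf hgfv hgQ using fun n =>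
    QForm.exists_truncation hpBD (fun _ => p.Q_nonneg) hv hvpos (p.incl_mem (f n))
  have hgDq : ∀ n, g n ∈ Dq := fun n => hideal _ (hfDq n) _ (hg n) (hgf n)
  obtain ⟨C, hC⟩ := isBounded_iff_forall_norm_le.1 (Metric.isBounded_range_of_tendsto f hfv)
  have hgC : ∀ n, p.Q (g n) ≤ C ^ 2 + p.Q v := fun n => by
    have hfC := pow_le_pow_left₀ (norm_nonneg _) (hC _ ⟨n, rfl⟩) 2
    rw [p.norm_sq_domain] at hfC
    linarith [hgQ n]
  have hg_tendsto : Tendsto g atTop (𝓝 v) := tendsto_iff_norm_sub_tendsto_zero.2 <|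
    squeeze_zero (fun n => norm_nonneg _) hgfv
      (tendsto_iff_norm_sub_tendsto_zero.1 ((p.incl.continuous.tendsto _).comp hfv))
  obtain ⟨φ, hφ⟩ := p.exists_tendsto_cesaro hclosed.shift hg hgC hv hg_tendsto
  exact ⟨fun K => ((K : ℝ) + 1)⁻¹ • ∑ k ∈ Finset.range (K + 1), g (φ k),
    (Dq.restrictScalars ℝ).convex.smul_sum_range_mem (fun k => hgDq (φ k)),
    (Lp.convex_nonnegBelow v).smul_sum_range_mem (fun k => hg0v (φ k)), hφ⟩
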